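/- Let j_0(q)=1 and for n>0 let j_n(q) = Σ_{0≤m≤n−1} q^m [n−1 choose m]_q, the generating function for partitions where the largest part plus the number of parts is at most n. Then Σ_{n≥0} ( 1/(q;q)_∞ − j_n(q) ) = (2/(q;q)_∞) Σ_{n≥1} q^n/(1−q^n), as formal power series in q. -/

import Mathlib

open PowerSeries Finset

/-- The product (coefficient-wise convergence) topology on formal power series. -/
noncomputable instance : TopologicalSpace (PowerSeries ℚ) :=
  inferInstanceAs (TopologicalSpace ((Unit →₀ ℕ) → ℚ))

/-- The finite q-Pochhammer symbol `(a; q)_n = ∏_{k=0}^{n-1} (1 - a q^k)`. -/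
noncomputable def poch (a q : PowerSeries ℚ) (n : ℕ) : PowerSeries ℚ :=
  ∏ k ∈ range n, (1 - a * q ^ k)

/-- The infinite q-Pochhammer symbol `(a; q)_∞ = ∏_{k≥0} (1 - a q^k)`. -/
noncomputable def pochInf (a q : PowerSeries ℚ) : PowerSeries ℚ :=
  ∏' k : ℕ, (1 - a * q ^ k)

/-- The Gaussian binomial coefficient `[n choose m]_q = (q;q)_n / ((q;q)_m (q;q)_{n-m})`. -/
noncomputable def gauss (n m : ℕ) : PowerSeries ℚ :=
  poch X X n * (poch X X m * poch X X (n - m))⁻¹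

/-- `j_n(q)`, the generating function for partitions where the largest part plus the
number of parts is at most `n`. -/
noncomputable def jP : ℕ → PowerSeries ℚ
  | 0 => 1
  | n + 1 => ∑ m ∈ range (n + 1), X ^ m * gauss n m

/-!
Coefficientwise, `1/(q;q)_∞ - j_n(q)` counts the partitions `λ` whose largest part `λ₁` and
number of parts `ℓ(λ)` satisfy `λ₁ + ℓ(λ) > n`, so the left side is `∑_λ (λ₁ + ℓ(λ)) q^|λ|`.
By the q-Pascal recursion, `[w + h choose w]_q` is the generating function of partitions fitting
in a `w × h` box; this identifies the coefficients of `j_n` and, through the symmetry `w ↔ h`,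
gives `∑_λ λ₁ q^|λ| = ∑_λ ℓ(λ) q^|λ|`. Finally, removing one part `j` shows
`∑_λ m_j(λ) q^|λ| = q^j / (1 - q^j) · 1/(q;q)_∞`, where `m_j(λ)` is the multiplicity of `j`,
and summing over `j` gives `∑_λ ℓ(λ) q^|λ|`.
-/

-- The topology above is that of `PowerSeries.WithPiTopology`, whose instances are only scoped.
instance : T2Space (PowerSeries ℚ) := PowerSeries.WithPiTopology.instT2Space ℚ

instance : IsTopologicalSemiring (PowerSeries ℚ) :=
  PowerSeries.WithPiTopology.instIsTopologicalSemiring ℚ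

section Counting

variable {M : Type*} [AddCommMonoidWithOne M] [TopologicalSpace M]

lemma hasSum_ite_lt (c : ℕ) : HasSum (fun n : ℕ => if n < c then (1 : M) else 0) c := by
  have h := hasSum_sum_of_ne_finset_zero (f := fun n : ℕ => if n < c then (1 : M) else 0)
    (s := range c) (L := .unconditional ℕ) fun n hn => if_neg (by simpa using hn)
  rwa [Finset.sum_boole, Finset.filter_true_of_mem fun n hn => by simpa using hn,
    card_range] at h

variable [ContinuousAdd M]

lemma hasSum_card_filter_lt {α : Type*} [Fintype α] (f : α → ℕ) :
    HasSum (fun n : ℕ => (#{a | n < f a} : M)) (∑ a, (f a : M)) := by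
  simp_rw [← Finset.sum_boole]
  exact hasSum_sum fun a _ => hasSum_ite_lt (f a)

lemma hasSum_count_succ {s : Multiset ℕ} (hs : 0 ∉ s) :
    HasSum (fun n : ℕ => (s.count (n + 1) : M)) s.card := by
  induction s using Multiset.induction_on with
  | empty => simp [hasSum_zero]
  | cons a s ih =>
    obtain ⟨b, rfl⟩ : ∃ b, a = b + 1 :=
      Nat.exists_eq_add_one_of_ne_zero fun h => hs (h ▸ Multiset.mem_cons_self a s)
    have hb : HasSum (fun n : ℕ => if n = b then (1 : M) else 0) 1 := hasSum_ite_eq b 1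
    simpa [Multiset.count_cons, add_comm] using (ih fun h => hs (Multiset.mem_cons_of_mem h)).add hb

end Counting

lemma card_filter_lt_eq {α : Type*} [Fintype α] (f : α → ℕ) (n : ℕ) :
    #{a | n < f a} = Fintype.card α - #{a | f a ≤ n} := by
  classical
  rw [← Finset.card_compl, Finset.compl_filter]
  simp only [not_le]

lemma Multiset.sup_mem_of_ne_zero {α : Type*} [LinearOrder α] [OrderBot α] {s : Multiset α}
    (hs : s ≠ 0) : s.sup ∈ s := by
  obtain ⟨a, ha, hmax⟩ := s.exists_max_image id hs
  rwa [le_antisymm (Multiset.sup_le.mpr hmax) (Multiset.le_sup ha)]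

namespace Nat.Partition

variable {N : ℕ}

lemma card_parts_le (l : N.Partition) : l.parts.card ≤ N := by
  simpa [l.parts_sum] using Multiset.card_nsmul_le_sum fun _ hx => l.parts_pos hx

lemma sup_parts_le (l : N.Partition) : l.parts.sup ≤ N :=
  Multiset.sup_le.mpr fun _ => le_of_mem_parts

lemma sup_parts_eq_zero_iff (l : N.Partition) : l.parts.sup = 0 ↔ l.parts = 0 := by
  refine ⟨fun h => Multiset.eq_zero_of_forall_notMem fun x hx => ?_, fun h => by simp [h]⟩
  have := Multiset.le_sup hx
  have := l.parts_pos hx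
  omega

lemma sup_parts_mem (l : N.Partition) (h : l.parts.sup ≠ 0) : l.parts.sup ∈ l.parts :=
  Multiset.sup_mem_of_ne_zero fun h0 => h (by simp [h0])

lemma card_filter_parts_eq_zero : #{l : N.Partition | l.parts = 0} = if N = 0 then 1 else 0 := by
  split_ifs with hN
  · subst hN
    simp [Finset.filter_true_of_mem]
  · exact Finset.card_eq_zero.mpr <| Finset.filter_eq_empty_iff.mpr fun l _ h =>
      hN (by simpa [h] using l.parts_sum.symm)

lemma sum_filter_mem_parts {M : Type*} [AddCommMonoid M] (g : Multiset ℕ → M) {a : ℕ}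
    (ha : 1 ≤ a) (haN : a ≤ N) :
    ∑ l : N.Partition with a ∈ l.parts, g l.parts = ∑ m : (N - a).Partition, g (a ::ₘ m.parts) := by
  rw [Finset.sum_subtype (p := fun l => a ∈ l.parts) _ (fun l => by simp)]
  exact Fintype.sum_equiv (partitionWithPartEquiv ha haN) _ _ fun l => by
    simp [Multiset.cons_erase l.2]

lemma card_filter_mem_parts (P : Multiset ℕ → Prop) [DecidablePred P] {a : ℕ}
    (ha : 1 ≤ a) (haN : a ≤ N) :
    #{l : N.Partition | P l.parts ∧ a ∈ l.parts}
      = #{m : (N - a).Partition | P (a ::ₘ m.parts)} := by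
  have h := sum_filter_mem_parts (fun s => if P s then 1 else 0) ha haN
  simp only [Finset.sum_boole, Nat.cast_id, Finset.filter_filter, and_comm] at h
  exact h

lemma sum_count_parts {j : ℕ} (hj : 1 ≤ j) (hjN : j ≤ N) :
    ∑ l : N.Partition, l.parts.count j
      = ∑ m : (N - j).Partition, m.parts.count j + Fintype.card (N - j).Partition := by
  rw [← Finset.sum_filter_of_ne (f := fun l : N.Partition => l.parts.count j)
      (p := fun l => j ∈ l.parts) fun l _ h => Multiset.count_ne_zero.mp h,
    sum_filter_mem_parts (fun s => s.count j) hj hjN]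
  simp [Multiset.count_cons_self, Finset.sum_add_distrib]

end Nat.Partition

open Nat.Partition

def boxCount (w h N : ℕ) : ℕ := #{l : N.Partition | l.parts.sup ≤ w ∧ l.parts.card ≤ h}

lemma boxCount_zero_left (h N : ℕ) : boxCount 0 h N = if N = 0 then 1 else 0 := by
  rw [boxCount, ← card_filter_parts_eq_zero]
  congr 1
  refine Finset.filter_congr fun l _ => ?_
  rw [Nat.le_zero, sup_parts_eq_zero_iff]
  exact ⟨And.left, fun h0 => ⟨h0, by simp [h0]⟩⟩

lemma boxCount_zero_right (w N : ℕ) : boxCount w 0 N = if N = 0 then 1 else 0 := by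
  rw [boxCount, ← card_filter_parts_eq_zero]
  congr 1
  refine Finset.filter_congr fun l _ => ?_
  rw [Nat.le_zero, Multiset.card_eq_zero]
  exact ⟨And.right, fun h0 => ⟨by simp [h0], h0⟩⟩

/-- Split according to whether the part `w + 1` occurs. -/
lemma boxCount_succ_succ (w h N : ℕ) :
    boxCount (w + 1) (h + 1) N
      = boxCount w (h + 1) N + if w + 1 ≤ N then boxCount (w + 1) h (N - (w + 1)) else 0 := by
  rw [boxCount, ← Finset.card_filter_add_card_filter_not (p := fun l => w + 1 ∈ l.parts),
    Finset.filter_filter, Finset.filter_filter, add_comm]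
  congr 1
  · congr 1
    refine Finset.filter_congr fun l _ => ⟨fun ⟨⟨hs, hc⟩, hw⟩ => ⟨?_, hc⟩, fun ⟨hs, hc⟩ =>
      ⟨⟨by omega, hc⟩, fun hw => by have := Multiset.le_sup hw; omega⟩⟩
    by_contra! hlt
    have hsup : l.parts.sup = w + 1 := by omega
    exact hw (hsup ▸ sup_parts_mem l (by omega))
  · split_ifs with hwN
    · rw [card_filter_mem_parts (fun s => s.sup ≤ w + 1 ∧ s.card ≤ h + 1) (by omega) hwN,
        boxCount]
      congr 1
      refine Finset.filter_congr fun m _ => ?_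
      simp only [Multiset.sup_cons, Multiset.card_cons, sup_le_iff, le_refl, true_and,
        add_le_add_iff_right]
    · refine Finset.card_eq_zero.mpr <| Finset.filter_eq_empty_iff.mpr fun l _ h => ?_
      exact hwN (le_of_mem_parts h.2)

noncomputable def boxGen (w h : ℕ) : PowerSeries ℚ := PowerSeries.mk fun N => (boxCount w h N : ℚ)

lemma boxGen_zero_left (h : ℕ) : boxGen 0 h = 1 := by
  ext N
  simp [boxGen, boxCount_zero_left, coeff_one]

lemma boxGen_zero_right (w : ℕ) : boxGen w 0 = 1 := by
  ext N
  simp [boxGen, boxCount_zero_right, coeff_one]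

lemma boxGen_succ_succ (w h : ℕ) :
    boxGen (w + 1) (h + 1) = boxGen w (h + 1) + X ^ (w + 1) * boxGen (w + 1) h := by
  ext N
  simp only [boxGen, map_add, coeff_mk, coeff_X_pow_mul', boxCount_succ_succ]
  split_ifs <;> simp

lemma poch_X_succ (n : ℕ) : poch X X (n + 1) = poch X X n * (1 - X ^ (n + 1)) := by
  rw [poch, Finset.prod_range_succ, ← pow_succ']
  rfl

lemma constantCoeff_poch_X (n : ℕ) : constantCoeff (poch X X n) = 1 := by
  simp [poch]

lemma poch_mul_poch_mul_boxGen (w h : ℕ) :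
    poch X X w * poch X X h * boxGen w h = poch X X (w + h) := by
  induction w generalizing h with
  | zero => simp [boxGen_zero_left, poch]
  | succ w ihw =>
    induction h with
    | zero => simp [boxGen_zero_right, poch]
    | succ h ihh =>
      have hw := ihw (h + 1)
      calc poch X X (w + 1) * poch X X (h + 1) * boxGen (w + 1) (h + 1)
          = (1 - X ^ (w + 1)) * (poch X X w * poch X X (h + 1) * boxGen w (h + 1))
            + X ^ (w + 1) * (1 - X ^ (h + 1))
              * (poch X X (w + 1) * poch X X h * boxGen (w + 1) h) := by
            rw [boxGen_succ_succ, poch_X_succ w, poch_X_succ h]; ring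
        _ = poch X X (w + 1 + h) * (1 - X ^ (w + 1 + h + 1)) := by
            rw [hw, ihh, show w + (h + 1) = w + 1 + h by omega]; ring
        _ = poch X X (w + 1 + (h + 1)) := by rw [← poch_X_succ]; rfl

lemma boxGen_comm (w h : ℕ) : boxGen w h = boxGen h w := by
  have hpoch : poch X X w * poch X X h ≠ 0 := fun h0 => by
    simpa [constantCoeff_poch_X] using congrArg constantCoeff h0
  refine mul_left_cancel₀ hpoch ?_
  rw [poch_mul_poch_mul_boxGen, mul_comm (poch X X w), poch_mul_poch_mul_boxGen, add_comm]

lemma boxCount_comm (w h N : ℕ) : boxCount w h N = boxCount h w N := by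
  simpa [boxGen] using congrArg (coeff N) (boxGen_comm w h)

lemma gauss_eq_boxGen {n m : ℕ} (hmn : m ≤ n) : gauss n m = boxGen m (n - m) := by
  have hunit : constantCoeff (poch X X m * poch X X (n - m)) ≠ 0 := by
    simp [constantCoeff_poch_X]
  rw [gauss, ← Nat.add_sub_cancel' hmn, ← poch_mul_poch_mul_boxGen, Nat.add_sub_cancel_left,
    mul_comm _ (boxGen _ _), mul_assoc, PowerSeries.mul_inv_cancel _ hunit, mul_one]

/-- Removing one largest part `m` leaves a partition of `N - m` in an `m × k` box. -/
lemma card_filter_sup_eq (m k N : ℕ) :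
    #{l : N.Partition | l.parts.sup = m ∧ l.parts.card ≤ k + 1}
      = if m ≤ N then boxCount m k (N - m) else 0 := by
  rcases Nat.eq_zero_or_pos m with rfl | hm
  · rw [if_pos (Nat.zero_le N), Nat.sub_zero, boxCount_zero_left, ← card_filter_parts_eq_zero]
    congr 1
    refine Finset.filter_congr fun l _ => ?_
    rw [sup_parts_eq_zero_iff]
    exact ⟨And.left, fun h0 => ⟨h0, by simp [h0]⟩⟩
  rw [Finset.filter_congr (q := fun l : N.Partition =>
      (l.parts.sup ≤ m ∧ l.parts.card ≤ k + 1) ∧ m ∈ l.parts) fun l _ =>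
    ⟨fun ⟨hs, hc⟩ => ⟨⟨hs.le, hc⟩, hs ▸ sup_parts_mem l (by omega)⟩,
      fun ⟨⟨hs, hc⟩, hm⟩ => ⟨le_antisymm hs (Multiset.le_sup hm), hc⟩⟩]
  split_ifs with hmN
  · rw [card_filter_mem_parts (fun s => s.sup ≤ m ∧ s.card ≤ k + 1) hm hmN, boxCount]
    congr 1
    refine Finset.filter_congr fun l _ => ?_
    simp only [Multiset.sup_cons, Multiset.card_cons, sup_le_iff, le_refl, true_and,
      add_le_add_iff_right]
  · refine Finset.card_eq_zero.mpr <| Finset.filter_eq_empty_iff.mpr fun l _ h => ?_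
    exact hmN (le_of_mem_parts h.2)

lemma coeff_jP (n N : ℕ) :
    coeff N (jP n) = #{l : N.Partition | l.parts.sup + l.parts.card ≤ n} := by
  cases n with
  | zero =>
    rw [jP, coeff_one, Finset.filter_congr (q := fun l : N.Partition => l.parts = 0) fun l _ =>
      ⟨fun h => Multiset.card_eq_zero.mp (by omega), fun h => by simp [h]⟩,
      card_filter_parts_eq_zero]
    split_ifs <;> simp
  | succ n =>
    have hmaps : Set.MapsTo (fun l : N.Partition => l.parts.sup)
        ({l | l.parts.sup + l.parts.card ≤ n + 1} : Finset N.Partition) (range (n + 1)) := by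
      intro l hl
      rw [Finset.mem_coe, Finset.mem_filter] at hl
      rw [Finset.mem_coe, Finset.mem_range]
      rcases Nat.eq_zero_or_pos l.parts.card with h0 | h0
      · simp [(sup_parts_eq_zero_iff l).mpr (Multiset.card_eq_zero.mp h0)]
      · dsimp only
        omega
    rw [jP, map_sum, Finset.card_eq_sum_card_fiberwise hmaps, Nat.cast_sum]
    refine Finset.sum_congr rfl fun m hm => ?_
    rw [Finset.mem_range] at hm
    rw [gauss_eq_boxGen (by omega), coeff_X_pow_mul', Finset.filter_filter,
      Finset.filter_congr (q := fun l : N.Partition =>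
        l.parts.sup = m ∧ l.parts.card ≤ n - m + 1) fun l _ => by omega,
      card_filter_sup_eq, boxGen]
    split_ifs <;> simp

noncomputable def statGenFun (f : Multiset ℕ → ℕ) : PowerSeries ℚ :=
  PowerSeries.mk fun N => ∑ l : N.Partition, (f l.parts : ℚ)

lemma statGenFun_add (f g : Multiset ℕ → ℕ) :
    statGenFun (fun s => f s + g s) = statGenFun f + statGenFun g := by
  ext N
  simp [statGenFun, Finset.sum_add_distrib]

lemma pochInf_mul_statGenFun_one : pochInf X X * statGenFun 1 = 1 := by
  have hpoch : HasProd (fun i => (1 - X ^ (i + 1) : PowerSeries ℚ)) (pochInf X X) := by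
    simp_rw [pochInf, ← pow_succ']
    exact (PowerSeries.WithPiTopology.multipliable_one_sub_X_pow ℚ).hasProd
  have hgen : HasProd (fun i => ∑' j : ℕ, (X ^ (i + 1) : PowerSeries ℚ) ^ j) (statGenFun 1) := by
    have hP : statGenFun 1 = PowerSeries.mk fun N => (#(restricted N fun _ => True) : ℚ) := by
      ext N
      simp [statGenFun, restricted]
    simp_rw [hP, ← pow_mul]
    exact hasProd_powerSeriesMk_card_restricted ℚ fun _ => True
  have hgeom (i : ℕ) : (1 - X ^ (i + 1) : PowerSeries ℚ) * ∑' j : ℕ, (X ^ (i + 1)) ^ j = 1 :=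
    PowerSeries.WithPiTopology.one_sub_mul_tsum_pow_of_constantCoeff_eq_zero (by simp)
  refine (hpoch.mul hgen).unique ?_
  simpa only [hgeom] using hasProd_one

lemma inv_pochInf : (pochInf X X)⁻¹ = statGenFun 1 := by
  have hcc : constantCoeff (pochInf X X) ≠ 0 := left_ne_zero_of_mul_eq_one <| by
    simpa using congrArg constantCoeff pochInf_mul_statGenFun_one
  exact ((PowerSeries.eq_inv_iff_mul_eq_one hcc).mpr
    (by rw [mul_comm, pochInf_mul_statGenFun_one])).symm

lemma hasSum_tails :
    HasSum (fun n => (pochInf X X)⁻¹ - jP n) (statGenFun fun s => s.sup + s.card) := by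
  refine (PowerSeries.WithPiTopology.hasSum_iff_hasSum_coeff ℚ).mpr fun N => ?_
  have h := hasSum_card_filter_lt (M := ℚ) fun l : N.Partition => l.parts.sup + l.parts.card
  simp only [card_filter_lt_eq, Nat.cast_sub (Finset.card_le_univ _)] at h
  simpa [inv_pochInf, statGenFun, coeff_jP] using h

lemma card_filter_sup_le (n N : ℕ) :
    #{l : N.Partition | l.parts.sup ≤ n} = #{l : N.Partition | l.parts.card ≤ n} := by
  have h := boxCount_comm n N N
  rwa [boxCount, boxCount,
    Finset.filter_congr fun l _ => and_iff_left (card_parts_le l),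
    Finset.filter_congr fun l _ => and_iff_right (sup_parts_le l)] at h

lemma statGenFun_sup : statGenFun (fun s => s.sup) = statGenFun (fun s => s.card) := by
  ext N
  simp only [statGenFun, coeff_mk]
  refine (hasSum_card_filter_lt fun l : N.Partition => l.parts.sup).unique ?_
  simp_rw [card_filter_lt_eq, card_filter_sup_le, ← card_filter_lt_eq]
  exact hasSum_card_filter_lt fun l : N.Partition => l.parts.card

lemma statGenFun_count_mul_one_sub {j : ℕ} (hj : 1 ≤ j) :
    statGenFun (Multiset.count j) * (1 - X ^ j) = X ^ j * statGenFun 1 := by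
  ext N
  rw [mul_sub, mul_one, map_sub, coeff_mul_X_pow', coeff_X_pow_mul']
  simp only [statGenFun, coeff_mk]
  split_ifs with hjN
  · simp only [Pi.one_apply, Nat.cast_one, Finset.sum_const, Finset.card_univ, nsmul_eq_mul,
      mul_one]
    rw [← Nat.cast_sum, ← Nat.cast_sum, sum_count_parts hj hjN]
    push_cast
    ring
  · rw [sub_zero]
    exact Finset.sum_eq_zero fun l _ =>
      Nat.cast_eq_zero.mpr (Multiset.count_eq_zero.mpr fun h => hjN (le_of_mem_parts h))

lemma pochInf_mul_statGenFun_count {j : ℕ} (hj : 1 ≤ j) :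
    pochInf X X * statGenFun (Multiset.count j) = X ^ j * (1 - X ^ j)⁻¹ := by
  have hunit : constantCoeff (1 - X ^ j : PowerSeries ℚ) ≠ 0 := by
    simp [zero_pow (Nat.one_le_iff_ne_zero.mp hj)]
  calc pochInf X X * statGenFun (Multiset.count j)
      = pochInf X X * (statGenFun (Multiset.count j) * (1 - X ^ j)) * (1 - X ^ j)⁻¹ := by
        rw [mul_assoc, mul_assoc, PowerSeries.mul_inv_cancel _ hunit, mul_one]
    _ = X ^ j * (1 - X ^ j)⁻¹ := by
        rw [statGenFun_count_mul_one_sub hj, mul_left_comm, pochInf_mul_statGenFun_one, mul_one]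

lemma hasSum_statGenFun_count :
    HasSum (fun n => statGenFun (Multiset.count (n + 1))) (statGenFun fun s => s.card) := by
  refine (PowerSeries.WithPiTopology.hasSum_iff_hasSum_coeff ℚ).mpr fun N => ?_
  simp only [statGenFun, coeff_mk]
  exact hasSum_sum fun l _ => hasSum_count_succ fun h => (l.parts_pos h).false

lemma hasSum_X_pow_mul_inv_one_sub_X_pow :
    HasSum (fun n => X ^ (n + 1) * (1 - X ^ (n + 1) : PowerSeries ℚ)⁻¹)
      (pochInf X X * statGenFun fun s => s.card) := by
  simpa only [pochInf_mul_statGenFun_count (Nat.succ_pos _)] using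
    hasSum_statGenFun_count.mul_left (pochInf X X)

/-- sums of tails over `j_n(q)`. -/
theorem sum_of_tails_j :
    ∑' n : ℕ, ((pochInf X X)⁻¹ - jP n)
      = 2 * (pochInf X X)⁻¹
          * ∑' n : ℕ, X ^ (n + 1) * (1 - X ^ (n + 1) : PowerSeries ℚ)⁻¹ := by
  rw [hasSum_tails.tsum_eq, hasSum_X_pow_mul_inv_one_sub_X_pow.tsum_eq, statGenFun_add,
    statGenFun_sup, inv_pochInf]
  linear_combination (-2 * statGenFun fun s => s.card) * pochInf_mul_statGenFun_one
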